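/- arXiv:nlin/0007018 — 8 statements merged into one kernel-verified Lean document; each statement's English description precedes it below -/
import Mathlib

section
/- Let n ∈ ℕ, let f : ℝⁿ × ℝ → ℝⁿ be continuous, bounded, 2π-periodic in its second argument, and Lipschitz in its first argument uniformly in the second, and let g : ℝⁿ × ℝ × ℝ → ℝⁿ be continuous and bounded. Define the average ⟨f⟩(y) = (1/2π)∫₀^{2π} f(y,t) dt. Then for every x₀ ∈ ℝⁿ and every L > 0 there exist constants C > 0 and ε₀ > 0 such that for all ε ∈ (0, ε₀]: if x : [0, L/ε] → ℝⁿ solves ẋ(t) = ε f(x(t), t) + ε² g(x(t), t, ε) with x(0) = x₀, and y : [0, L/ε] → ℝⁿ solves ẏ(t) = ε ⟨f⟩(y(t)) with y(0) = x₀, then ‖x(t) − y(t)‖ ≤ C ε for all t ∈ [0, L/ε]. -/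
/-!
Write `h = f - ⟨f⟩` for the oscillating part of `f`, and `T = L/ε`. Along the averaged solution
`y`, which moves by only `O(ε)` per period, the integral `∫₀ᵗ h(y(s), s) ds` stays bounded on
`[0, T]`: over each period it differs by `O(ε)` from the integral with `y` frozen, which vanishes
since `h` has zero mean. Hence the near-identity transform `z = y + ε ∫₀ᵗ h(y(s), s) ds` is
`O(ε)`-close to `y` and solves `ż = ε f(y, t) = ε f(z, t) + O(ε²)`. Both `x` and `z` are thus
`O(ε²)`-approximate solutions of `ẋ = ε f(x, t)`, whose Lipschitz constant is `εK`, so Grönwall's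
inequality on `[0, T]` keeps them `O(ε² T e^{εKT}) = O(ε)` apart.
-/

open Real MeasureTheory intervalIntegral Set Function
open scoped NNReal

noncomputable def timeAverage {E F : Type*} [NormedAddCommGroup F] [NormedSpace ℝ F]
    (p : ℝ) (f : E × ℝ → F) (z : E) : F :=
  (1 / p) • ∫ t in (0 : ℝ)..p, f (z, t)

section TimeAverage

variable {E F : Type*} [NormedAddCommGroup F] [NormedSpace ℝ F] {p : ℝ}

lemma norm_smul_integral_le_of_norm_le (hp : 0 < p) {u : ℝ → F} {C : ℝ} (hu : ∀ t, ‖u t‖ ≤ C) :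
    ‖(1 / p) • ∫ t in (0 : ℝ)..p, u t‖ ≤ C := by
  have hI := norm_integral_le_of_norm_le_const (a := 0) (b := p) fun t _ => hu t
  rw [sub_zero, abs_of_pos hp] at hI
  rw [norm_smul, Real.norm_of_nonneg (by positivity), one_div, inv_mul_le_iff₀ hp, mul_comm]
  exact hI

lemma norm_timeAverage_le (hp : 0 < p) {f : E × ℝ → F} {M : ℝ} (hM : ∀ q, ‖f q‖ ≤ M) (z : E) :
    ‖timeAverage p f z‖ ≤ M :=
  norm_smul_integral_le_of_norm_le hp fun _ => hM _

lemma lipschitzWith_timeAverage [PseudoMetricSpace E] (hp : 0 < p) {f : E × ℝ → F}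
    (hf : Continuous f) {K : ℝ≥0} (hK : ∀ t, LipschitzWith K fun z => f (z, t)) :
    LipschitzWith K (timeAverage p f) := by
  refine LipschitzWith.of_dist_le_mul fun z z' => ?_
  have hint : ∀ z, IntervalIntegrable (fun t => f (z, t)) volume 0 p := fun z =>
    (hf.comp (continuous_const.prodMk continuous_id)).intervalIntegrable _ _
  rw [dist_eq_norm, timeAverage, timeAverage, ← smul_sub, ← integral_sub (hint z) (hint z')]
  exact norm_smul_integral_le_of_norm_le hp fun t => by
    simpa only [dist_eq_norm] using (hK t).dist_le_mul z z'

lemma integral_sub_timeAverage_eq_zero [CompleteSpace F] (hp : 0 < p) {f : E × ℝ → F} {z : E}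
    (hf : IntervalIntegrable (fun t => f (z, t)) volume 0 p) :
    ∫ t in (0 : ℝ)..p, (f (z, t) - timeAverage p f z) = 0 := by
  rw [integral_sub hf intervalIntegrable_const, intervalIntegral.integral_const, sub_zero,
    timeAverage, smul_smul, mul_one_div_cancel hp.ne', one_smul, sub_self]

end TimeAverage

section PeriodicMeanZero

variable {E F : Type*} [PseudoMetricSpace E] [NormedAddCommGroup F] [NormedSpace ℝ F]
  {h : E × ℝ → F} {p : ℝ} {K δ : ℝ≥0} {w : ℝ → E}

lemma norm_integral_add_period_le (hh : Continuous h) (hp : 0 ≤ p)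
    (hper : ∀ z, Periodic (fun t => h (z, t)) p) (hmean : ∀ z, ∫ t in (0 : ℝ)..p, h (z, t) = 0)
    (hK : ∀ t, LipschitzWith K fun z => h (z, t)) (hw : LipschitzWith δ w) (a : ℝ) :
    ‖∫ s in a..a + p, h (w s, s)‖ ≤ K * δ * p * p := by
  have hfrozen : ∫ s in a..a + p, h (w a, s) = 0 := by
    rw [(hper (w a)).intervalIntegral_add_eq a 0, zero_add, hmean]
  have hint : IntervalIntegrable (fun s => h (w s, s)) volume a (a + p) :=
    (hh.comp (hw.continuous.prodMk continuous_id)).intervalIntegrable _ _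
  have hint_frozen : IntervalIntegrable (fun s => h (w a, s)) volume a (a + p) :=
    (hh.comp (continuous_const.prodMk continuous_id)).intervalIntegrable _ _
  rw [← sub_zero (∫ s in a..a + p, h (w s, s)), ← hfrozen, ← integral_sub hint hint_frozen]
  have hbound : ∀ s ∈ uIoc a (a + p), ‖h (w s, s) - h (w a, s)‖ ≤ K * δ * p := fun s hs => by
    rw [uIoc_of_le (by linarith)] at hs
    rw [← dist_eq_norm, mul_assoc]
    calc dist (h (w s, s)) (h (w a, s)) ≤ K * dist (w s) (w a) := (hK s).dist_le_mul _ _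
      _ ≤ K * (δ * dist s a) := by gcongr; exact hw.dist_le_mul s a
      _ ≤ K * (δ * p) := by
        gcongr
        rw [Real.dist_eq, abs_of_pos (by linarith [hs.1])]
        linarith [hs.2]
  simpa [abs_of_nonneg hp] using norm_integral_le_of_norm_le_const hbound

lemma norm_integral_nat_mul_period_le (hh : Continuous h) (hp : 0 ≤ p)
    (hper : ∀ z, Periodic (fun t => h (z, t)) p) (hmean : ∀ z, ∫ t in (0 : ℝ)..p, h (z, t) = 0)
    (hK : ∀ t, LipschitzWith K fun z => h (z, t)) (hw : LipschitzWith δ w) (m : ℕ) :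
    ‖∫ s in (0 : ℝ)..m * p, h (w s, s)‖ ≤ m * (K * δ * p * p) := by
  have hint : ∀ a b : ℝ, IntervalIntegrable (fun s => h (w s, s)) volume a b := fun _ _ =>
    (hh.comp (hw.continuous.prodMk continuous_id)).intervalIntegrable _ _
  induction m with
  | zero => simp
  | succ m ih =>
    rw [Nat.cast_succ, add_one_mul, ← integral_add_adjacent_intervals (hint _ _) (hint _ _)]
    calc _ ≤ ‖∫ s in (0 : ℝ)..m * p, h (w s, s)‖ + ‖∫ s in m * p..m * p + p, h (w s, s)‖ :=
          norm_add_le _ _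
      _ ≤ m * (K * δ * p * p) + K * δ * p * p :=
          add_le_add ih (norm_integral_add_period_le hh hp hper hmean hK hw _)
      _ = (m + 1) * (K * δ * p * p) := by ring

lemma norm_integral_le_of_integral_period_eq_zero (hh : Continuous h) (hp : 0 < p) {M : ℝ}
    (hM : ∀ q, ‖h q‖ ≤ M) (hper : ∀ z, Periodic (fun t => h (z, t)) p)
    (hmean : ∀ z, ∫ t in (0 : ℝ)..p, h (z, t) = 0) (hK : ∀ t, LipschitzWith K fun z => h (z, t))
    (hw : LipschitzWith δ w) {τ : ℝ} (hτ : 0 ≤ τ) :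
    ‖∫ s in (0 : ℝ)..τ, h (w s, s)‖ ≤ K * δ * p * τ + p * M := by
  have hint : ∀ a b : ℝ, IntervalIntegrable (fun s => h (w s, s)) volume a b := fun _ _ =>
    (hh.comp (hw.continuous.prodMk continuous_id)).intervalIntegrable _ _
  set m := ⌊τ / p⌋₊
  have hm_le : m * p ≤ τ := (le_div_iff₀ hp).1 (Nat.floor_le (div_nonneg hτ hp.le))
  have hτ_lt : τ < m * p + p := by
    rw [← add_one_mul]; exact (div_lt_iff₀ hp).1 (Nat.lt_floor_add_one _)
  have htail : ‖∫ s in m * p..τ, h (w s, s)‖ ≤ p * M := by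
    have hM0 : 0 ≤ M := (norm_nonneg _).trans (hM (w 0, 0))
    calc _ ≤ M * |τ - m * p| := norm_integral_le_of_norm_le_const fun s _ => hM _
      _ ≤ M * p := by gcongr; rw [abs_of_nonneg (by linarith)]; linarith
      _ = p * M := mul_comm _ _
  rw [← integral_add_adjacent_intervals (hint 0 (m * p)) (hint _ τ)]
  calc _ ≤ ‖∫ s in (0 : ℝ)..m * p, h (w s, s)‖ + ‖∫ s in m * p..τ, h (w s, s)‖ := norm_add_le _ _
    _ ≤ m * (K * δ * p * p) + p * M :=
        add_le_add (norm_integral_nat_mul_period_le hh hp.le hper hmean hK hw m) htail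
    _ = K * δ * p * (m * p) + p * M := by ring
    _ ≤ K * δ * p * τ + p * M := by gcongr

end PeriodicMeanZero

lemma norm_integral_sub_timeAverage_le {E F : Type*} [PseudoMetricSpace E] [NormedAddCommGroup F]
    [NormedSpace ℝ F] [CompleteSpace F] {f : E × ℝ → F} {p M : ℝ} {K δ : ℝ≥0} {w : ℝ → E}
    (hp : 0 < p) (hf : Continuous f) (hM : ∀ q, ‖f q‖ ≤ M)
    (hper : ∀ z, Periodic (fun t => f (z, t)) p) (hK : ∀ t, LipschitzWith K fun z => f (z, t))
    (hw : LipschitzWith δ w) {τ : ℝ} (hτ : 0 ≤ τ) :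
    ‖∫ s in (0 : ℝ)..τ, (f (w s, s) - timeAverage p f (w s))‖ ≤
      2 * K * δ * p * τ + 2 * p * M := by
  have havg := lipschitzWith_timeAverage hp hf hK
  have hosc := norm_integral_le_of_integral_period_eq_zero (h := fun q => f q - timeAverage p f q.1)
    (hf.sub (havg.continuous.comp continuous_fst)) hp (M := M + M)
    (fun q => (norm_sub_le _ _).trans (add_le_add (hM q) (norm_timeAverage_le hp hM q.1)))
    (fun z t => by simp only [hper z t])
    (fun z => integral_sub_timeAverage_eq_zero hp
      ((hf.comp (continuous_const.prodMk continuous_id)).intervalIntegrable _ _))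
    (fun t => (hK t).sub havg) hw hτ
  simp only [NNReal.coe_add] at hosc
  linarith

lemma gronwallBound_zero_le {K ε x : ℝ} (hK : 0 ≤ K) (hε : 0 ≤ ε) :
    gronwallBound 0 K ε x ≤ ε * x * exp (K * x) := by
  rcases hK.eq_or_lt with rfl | hK
  · simp [gronwallBound_K0]
  rw [gronwallBound_of_K_ne_0 hK.ne']
  simp only [zero_mul, zero_add]
  rw [div_mul_eq_mul_div, div_le_iff₀ hK]
  have hexp : exp (K * x) - 1 ≤ K * x * exp (K * x) := by
    have := mul_le_mul_of_nonneg_left (one_sub_le_exp_neg (K * x)) (exp_pos (K * x)).le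
    rw [← exp_add, add_neg_cancel, exp_zero] at this
    linarith
  calc ε * (exp (K * x) - 1) ≤ ε * (K * x * exp (K * x)) := by gcongr
    _ = ε * x * exp (K * x) * K := by ring

section Averaging

variable {E : Type*} [NormedAddCommGroup E] [NormedSpace ℝ E] {f : E × ℝ → E} {K : ℝ≥0}
  {ε L : ℝ}

lemma exists_nearIdentity_of_hasDerivAt_timeAverage [CompleteSpace E] {p : ℝ} {M : ℝ≥0}
    (hp : 0 < p) (hf : Continuous f) (hM : ∀ q, ‖f q‖ ≤ M)
    (hper : ∀ z, Periodic (fun t => f (z, t)) p) (hK : ∀ t, LipschitzWith K fun z => f (z, t))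
    (hε : 0 < ε) (hL : 0 ≤ L) {y : ℝ → E}
    (hy : ∀ t ∈ Icc 0 (L / ε), HasDerivAt y (ε • timeAverage p f (y t)) t) :
    ∃ z : ℝ → E, z 0 = y 0 ∧ ∀ t ∈ Icc 0 (L / ε),
      HasDerivAt z (ε • f (y t, t)) t ∧ ‖z t - y t‖ ≤ ε * (2 * p * M * (K * L + 1)) := by
  have hT : 0 ≤ L / ε := div_nonneg hL hε.le
  have hy_lip : LipschitzOnWith (‖ε‖₊ * M) y (Icc 0 (L / ε)) :=
    (convex_Icc _ _).lipschitzOnWith_of_nnnorm_hasDerivWithin_le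
      (fun t ht => (hy t ht).hasDerivWithinAt) fun t _ => by
        rw [nnnorm_smul]
        gcongr
        exact norm_timeAverage_le hp hM _
  -- `y` extended by constants outside `[0, L/ε]`, so that the integrand below is continuous on `ℝ`
  set w : ℝ → E := fun s => y (projIcc 0 (L / ε) hT s)
  have hw : LipschitzWith (‖ε‖₊ * M) w := by
    have h := hy_lip.to_restrict.comp (LipschitzWith.projIcc hT)
    rwa [mul_one] at h
  have hwy : ∀ t ∈ Icc 0 (L / ε), w t = y t := fun t ht => by simp [w, projIcc_of_mem hT ht]
  have hosc : Continuous fun s => f (w s, s) - timeAverage p f (w s) :=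
    (hf.comp (hw.continuous.prodMk continuous_id)).sub
      ((lipschitzWith_timeAverage hp hf hK).continuous.comp hw.continuous)
  refine ⟨fun t => y t + ε • ∫ s in (0 : ℝ)..t, (f (w s, s) - timeAverage p f (w s)),
    by simp, fun t ht => ⟨?_, ?_⟩⟩
  · have hI := (hosc.integral_hasStrictDerivAt 0 t).hasDerivAt
    refine ((hy t ht).add (hI.const_smul ε)).congr_deriv ?_
    rw [hwy t ht, smul_sub, add_sub_cancel]
  · rw [add_sub_cancel_left, norm_smul, Real.norm_of_nonneg hε.le]
    gcongr
    have hεt : ε * t ≤ L := by rw [mul_comm]; exact (le_div_iff₀ hε).1 ht.2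
    calc _ ≤ 2 * K * (‖ε‖₊ * M : ℝ≥0) * p * t + 2 * p * M :=
          norm_integral_sub_timeAverage_le hp hf hM hper hK hw ht.1
      _ = 2 * p * M * (K * (ε * t) + 1) := by
          simp only [NNReal.coe_mul, coe_nnnorm, Real.norm_of_nonneg hε.le]; ring
      _ ≤ 2 * p * M * (K * L + 1) := by gcongr

lemma norm_sub_le_of_hasDerivAt_of_nearIdentity {N A : ℝ}
    (hK : ∀ t, LipschitzWith K fun z => f (z, t)) (hε : 0 < ε) {x x' y z : ℝ → E}
    (hx : ∀ t ∈ Icc 0 (L / ε), HasDerivAt x (x' t) t)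
    (hx' : ∀ t ∈ Icc 0 (L / ε), ‖x' t - ε • f (x t, t)‖ ≤ ε ^ 2 * N)
    (hz : ∀ t ∈ Icc 0 (L / ε), HasDerivAt z (ε • f (y t, t)) t ∧ ‖z t - y t‖ ≤ ε * A)
    (h0 : x 0 = z 0) :
    ∀ t ∈ Icc 0 (L / ε), ‖x t - y t‖ ≤ ε * ((N + K * A) * L * exp (K * L) + A) := by
  intro t ht
  have hεt : ε * t ≤ L := by rw [mul_comm]; exact (le_div_iff₀ hε).1 ht.2
  have hL : 0 ≤ L := (mul_nonneg hε.le ht.1).trans hεt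
  have hN : 0 ≤ N := nonneg_of_mul_nonneg_right ((norm_nonneg _).trans (hx' t ht)) (by positivity)
  have hA : 0 ≤ A := nonneg_of_mul_nonneg_right ((norm_nonneg _).trans (hz t ht).2) hε
  have hzy : ∀ t ∈ Ico 0 (L / ε), dist (ε • f (y t, t)) (ε • f (z t, t)) ≤ ε ^ 2 * (K * A) :=
    fun t ht => by
      rw [dist_smul₀, Real.norm_of_nonneg hε.le, dist_comm]
      calc ε * dist (f (z t, t)) (f (y t, t)) ≤ ε * (K * dist (z t) (y t)) := by
            gcongr; exact (hK t).dist_le_mul _ _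
        _ ≤ ε * (K * (ε * A)) := by
            gcongr; rw [dist_eq_norm]; exact (hz t (Ico_subset_Icc_self ht)).2
        _ = ε ^ 2 * (K * A) := by ring
  have hxz := dist_le_of_approx_trajectories_ODE (v := fun t u => ε • f (u, t))
    (K := ‖ε‖₊ * K) (fun t => (lipschitzWith_smul ε).comp (hK t))
    (fun t ht => (hx t ht).continuousAt.continuousWithinAt)
    (fun t ht => (hx t (Ico_subset_Icc_self ht)).hasDerivWithinAt)
    (fun t ht => by rw [dist_eq_norm]; exact hx' t (Ico_subset_Icc_self ht))
    (fun t ht => (hz t ht).1.continuousAt.continuousWithinAt)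
    (fun t ht => (hz t (Ico_subset_Icc_self ht)).1.hasDerivWithinAt) hzy
    (by rw [h0, dist_self]) t ht
  simp only [NNReal.coe_mul, coe_nnnorm, Real.norm_of_nonneg hε.le, sub_zero] at hxz
  calc ‖x t - y t‖ ≤ dist (x t) (z t) + ‖z t - y t‖ := by
        rw [dist_eq_norm]; exact norm_sub_le_norm_sub_add_norm_sub _ _ _
    _ ≤ (ε ^ 2 * N + ε ^ 2 * (K * A)) * t * exp (ε * K * t) + ε * A :=
        add_le_add (hxz.trans (gronwallBound_zero_le (by positivity) (by positivity)))
          (hz t ht).2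
    _ = ε * ((N + K * A) * (ε * t) * exp (K * (ε * t)) + A) := by ring_nf
    _ ≤ ε * ((N + K * A) * L * exp (K * L) + A) := by gcongr

end Averaging

theorem averaging_closeness_general
    (n : ℕ)
    (f : EuclideanSpace ℝ (Fin n) × ℝ → EuclideanSpace ℝ (Fin n))
    (g : EuclideanSpace ℝ (Fin n) × ℝ × ℝ → EuclideanSpace ℝ (Fin n))
    (hf_cont : Continuous f)
    (hf_bdd : ∃ M : ℝ, ∀ q, ‖f q‖ ≤ M)
    (hf_per : ∀ x t, f (x, t + 2 * π) = f (x, t))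
    (hf_lip : ∃ Lip : NNReal, ∀ t, LipschitzWith Lip fun x => f (x, t))
    (hg_bdd : ∃ M : ℝ, ∀ q, ‖g q‖ ≤ M)
    (favg : EuclideanSpace ℝ (Fin n) → EuclideanSpace ℝ (Fin n))
    (hfavg : ∀ y, favg y = (1 / (2 * π)) • ∫ t in (0:ℝ)..(2 * π), f (y, t)) :
    ∀ x₀ : EuclideanSpace ℝ (Fin n), ∀ L : ℝ, 0 < L →
      ∃ C : ℝ, 0 < C ∧ ∃ ε₀ : ℝ, 0 < ε₀ ∧
        ∀ ε : ℝ, 0 < ε → ε ≤ ε₀ →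
          ∀ x y : ℝ → EuclideanSpace ℝ (Fin n),
            (∀ t ∈ Set.Icc (0:ℝ) (L / ε),
              HasDerivAt x (ε • f (x t, t) + ε ^ 2 • g (x t, t, ε)) t) →
            x 0 = x₀ →
            (∀ t ∈ Set.Icc (0:ℝ) (L / ε), HasDerivAt y (ε • favg (y t)) t) →
            y 0 = x₀ →
            ∀ t ∈ Set.Icc (0:ℝ) (L / ε), ‖x t - y t‖ ≤ C * ε := by
  intro x₀ L hL
  obtain ⟨M, hM⟩ : ∃ M : ℝ≥0, ∀ q, ‖f q‖ ≤ M :=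
    let ⟨M, hM⟩ := hf_bdd; ⟨M.toNNReal, fun q => (hM q).trans M.le_coe_toNNReal⟩
  obtain ⟨K, hK⟩ := hf_lip
  obtain ⟨N, hN⟩ := hg_bdd
  have hN0 : 0 ≤ N := (norm_nonneg _).trans (hN (x₀, 0, 0))
  obtain rfl : favg = timeAverage (2 * π) f := funext hfavg
  set A := 2 * (2 * π) * M * (K * L + 1)
  refine ⟨(N + K * A) * L * exp (K * L) + A + 1, by positivity, 1, one_pos,
    fun ε hε _ x y hx hx0 hy hy0 t ht => ?_⟩
  obtain ⟨z, hz0, hz⟩ := exists_nearIdentity_of_hasDerivAt_timeAverage (by positivity) hf_cont hM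
    hf_per hK hε hL.le hy
  have hx' : ∀ t ∈ Icc 0 (L / ε), ‖(ε • f (x t, t) + ε ^ 2 • g (x t, t, ε)) - ε • f (x t, t)‖
      ≤ ε ^ 2 * N := fun t _ => by
    rw [add_sub_cancel_left, norm_smul, Real.norm_of_nonneg (by positivity)]
    gcongr
    exact hN _
  calc ‖x t - y t‖ ≤ ε * ((N + K * A) * L * exp (K * L) + A) :=
        norm_sub_le_of_hasDerivAt_of_nearIdentity hK hε hx hx' hz
          (hx0.trans (hz0.trans hy0).symm) t ht
    _ ≤ ((N + K * A) * L * exp (K * L) + A + 1) * ε := by linarith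

/-- Averaging theorem, part (i): solutions of the slow periodically forced system
`ẋ = ε f(x,t) + ε² g(x,t,ε)` and of the averaged system `ẏ = ε ⟨f⟩(y)` with the same
initial condition stay `O(ε)`-close on the time scale `1/ε`. -/
theorem averaging_closeness
    (n : ℕ)
    (f : EuclideanSpace ℝ (Fin n) × ℝ → EuclideanSpace ℝ (Fin n))
    (g : EuclideanSpace ℝ (Fin n) × ℝ × ℝ → EuclideanSpace ℝ (Fin n))
    (hf_cont : Continuous f)
    (hf_bdd : ∃ M : ℝ, ∀ q, ‖f q‖ ≤ M)
    (hf_per : ∀ x t, f (x, t + 2 * π) = f (x, t))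
    (hf_lip : ∃ Lip : NNReal, ∀ t, LipschitzWith Lip fun x => f (x, t))
    (hg_cont : Continuous g)
    (hg_bdd : ∃ M : ℝ, ∀ q, ‖g q‖ ≤ M)
    (favg : EuclideanSpace ℝ (Fin n) → EuclideanSpace ℝ (Fin n))
    (hfavg : ∀ y, favg y = (1 / (2 * π)) • ∫ t in (0:ℝ)..(2 * π), f (y, t)) :
    ∀ x₀ : EuclideanSpace ℝ (Fin n), ∀ L : ℝ, 0 < L →
      ∃ C : ℝ, 0 < C ∧ ∃ ε₀ : ℝ, 0 < ε₀ ∧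
        ∀ ε : ℝ, 0 < ε → ε ≤ ε₀ →
          ∀ x y : ℝ → EuclideanSpace ℝ (Fin n),
            (∀ t ∈ Set.Icc (0:ℝ) (L / ε),
              HasDerivAt x (ε • f (x t, t) + ε ^ 2 • g (x t, t, ε)) t) →
            x 0 = x₀ →
            (∀ t ∈ Set.Icc (0:ℝ) (L / ε), HasDerivAt y (ε • favg (y t)) t) →
            y 0 = x₀ →
            ∀ t ∈ Set.Icc (0:ℝ) (L / ε), ‖x t - y t‖ ≤ C * ε :=
  averaging_closeness_general n f g hf_cont hf_bdd hf_per hf_lip hg_bdd favg hfavg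
end

section
/- Let a > 0, e ∈ [0,1), and i, ω ∈ ℝ. With X(E) = a(cos E − e), Y(E) = a√(1−e²) sin E, define z(E) = sin i · (X(E) sin ω + Y(E) cos ω). Then the averages over the mean anomaly satisfy (1/2π)∫₀^{2π} z(E)(1 − e cos E) dE = −(3/2) a e sin i sin ω, and (1/2π)∫₀^{2π} z(E)²(1 − e cos E) dE = a² sin²i [1/2 + (e²/4)(3 − 5 cos 2ω)]. -/
open Real intervalIntegral

/-! Writing `z = A (cos E - e) + B sin E` with `A = a sin i sin ω` and
`B = a sin i √(1 - e²) cos ω`, both weighted integrands are polynomials of degree at most three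
in `cos E` and `sin E`. Over a full period only the monomials `1`, `cos² E` and `sin² E` have
nonzero integral. -/

theorem integral_linear_mul_one_sub_mul_cos (A B e : ℝ) :
    ∫ E in (0:ℝ)..2 * π, (A * (cos E - e) + B * sin E) * (1 - e * cos E)
      = -(3 * π * e * A) := by
  have hexpand : ∀ E, (A * (cos E - e) + B * sin E) * (1 - e * cos E)
      = -(A * e) + A * (1 + e ^ 2) * cos E + B * sin E - A * e * cos E ^ 2
        - B * e * (sin E * cos E) := fun E => by ring
  simp (disch := (apply Continuous.intervalIntegrable; fun_prop)) only
    [hexpand, integral_add, integral_sub, integral_const_mul, integral_const, integral_cos,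
      integral_sin, integral_cos_sq, integral_sin_mul_cos₁]
  simp only [sin_two_pi, cos_two_pi, sin_zero, cos_zero, smul_eq_mul]
  ring

theorem integral_sq_linear_mul_one_sub_mul_cos (A B e : ℝ) :
    ∫ E in (0:ℝ)..2 * π, (A * (cos E - e) + B * sin E) ^ 2 * (1 - e * cos E)
      = π * (A ^ 2 * (1 + 4 * e ^ 2) + B ^ 2) := by
  have hexpand : ∀ E, (A * (cos E - e) + B * sin E) ^ 2 * (1 - e * cos E)
      = A ^ 2 * e ^ 2 - A ^ 2 * e * (2 + e ^ 2) * cos E + A ^ 2 * (1 + 2 * e ^ 2) * cos E ^ 2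
        - A ^ 2 * e * cos E ^ 3 - 2 * A * B * e * sin E
        + 2 * A * B * (1 + e ^ 2) * (sin E * cos E) - 2 * A * B * e * (sin E * cos E ^ 2)
        + B ^ 2 * sin E ^ 2 - B ^ 2 * e * (sin E ^ 2 * cos E) := fun E => by ring
  simp (disch := (apply Continuous.intervalIntegrable; fun_prop)) only
    [hexpand, integral_add, integral_sub, integral_const_mul, integral_const, integral_cos,
      integral_sin, integral_cos_sq, integral_sin_sq, integral_sin_mul_cos₁, integral_cos_pow_three,
      integral_sin_mul_cos_sq, integral_sin_sq_mul_cos]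
  simp only [sin_two_pi, cos_two_pi, sin_zero, cos_zero, smul_eq_mul]
  ring

theorem kepler_mean_anomaly_averages_z_general
    (a e i ω : ℝ) (he0 : 0 ≤ e) (he1 : e < 1) :
    (1 / (2 * π)) * ∫ E in (0:ℝ)..(2 * π),
        (Real.sin i * ((a * (Real.cos E - e)) * Real.sin ω
          + (a * Real.sqrt (1 - e ^ 2) * Real.sin E) * Real.cos ω))
          * (1 - e * Real.cos E)
      = -(3 / 2) * a * e * Real.sin i * Real.sin ω ∧
    (1 / (2 * π)) * ∫ E in (0:ℝ)..(2 * π),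
        (Real.sin i * ((a * (Real.cos E - e)) * Real.sin ω
          + (a * Real.sqrt (1 - e ^ 2) * Real.sin E) * Real.cos ω)) ^ 2
          * (1 - e * Real.cos E)
      = a ^ 2 * Real.sin i ^ 2 * (1 / 2 + (e ^ 2 / 4) * (3 - 5 * Real.cos (2 * ω))) := by
  set A := sin i * a * sin ω
  set B := sin i * a * √(1 - e ^ 2) * cos ω
  have hz : ∀ E, sin i * (a * (cos E - e) * sin ω + a * √(1 - e ^ 2) * sin E * cos ω)
      = A * (cos E - e) + B * sin E := fun E => by ring
  have hsqrt : √(1 - e ^ 2) ^ 2 = 1 - e ^ 2 := sq_sqrt (by nlinarith)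
  simp only [hz]
  rw [integral_linear_mul_one_sub_mul_cos, integral_sq_linear_mul_one_sub_mul_cos]
  have hπ : π ≠ 0 := pi_ne_zero
  constructor
  · field_simp
    ring
  · rw [cos_two_mul]
    field_simp
    linear_combination (4 * sin i ^ 2 * a ^ 2 * cos ω ^ 2) * hsqrt
      + (4 * a ^ 2 * sin i ^ 2 * (1 + 4 * e ^ 2)) * sin_sq_add_cos_sq ω

/-- Averages over the mean anomaly of the orbit's z-coordinate
`z = sin i (X sin ω + Y cos ω)`: one has `⟨z⟩ = −(3/2) a e sin i sin ω` and
`⟨z²⟩ = a² sin²i [1/2 + (e²/4)(3 − 5 cos 2ω)]`. -/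
theorem kepler_mean_anomaly_averages_z
    (a e i ω : ℝ) (ha : 0 < a) (he0 : 0 ≤ e) (he1 : e < 1) :
    (1 / (2 * π)) * ∫ E in (0:ℝ)..(2 * π),
        (Real.sin i * ((a * (Real.cos E - e)) * Real.sin ω
          + (a * Real.sqrt (1 - e ^ 2) * Real.sin E) * Real.cos ω))
          * (1 - e * Real.cos E)
      = -(3 / 2) * a * e * Real.sin i * Real.sin ω ∧
    (1 / (2 * π)) * ∫ E in (0:ℝ)..(2 * π),
        (Real.sin i * ((a * (Real.cos E - e)) * Real.sin ω
          + (a * Real.sqrt (1 - e ^ 2) * Real.sin E) * Real.cos ω)) ^ 2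
          * (1 - e * Real.cos E)
      = a ^ 2 * Real.sin i ^ 2 * (1 / 2 + (e ^ 2 / 4) * (3 - 5 * Real.cos (2 * ω))) :=
  kepler_mean_anomaly_averages_z_general a e i ω he0 he1
end

section
/- Let a > 0, e ∈ [0,1), and i, ω ∈ ℝ. With X(E) = a(cos E − e), Y(E) = a√(1−e²) sin E, r(E) = a(1 − e cos E), define the quadratic Zeeman perturbation H₁(E) = (1/16)[(1 + cos²i) r(E)² + sin²i (cos 2ω · (X(E)² − Y(E)²) − sin 2ω · 2 X(E) Y(E))]. Then its average over the mean anomaly equals (1/2π)∫₀^{2π} H₁(E)(1 − e cos E) dE = (a²/16)[(1 + cos²i)(1 + (3/2)e²) + (5/2) e² sin²i cos 2ω]. -/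
/-!
Averaging over the mean anomaly means integrating in `E` against the weight `1 - e cos E`.
Using `sin² E = 1 - cos² E` and `√(1 - e²)² = 1 - e²`, each of `r²`, `X² - Y² = r² cos 2v` and
`2XY = r² sin 2v`, times the weight, is a cubic in `cos E` plus `sin E` times a quadratic in
`cos E`; over a period only the constant term and half the `cos² E` coefficient survive. Hence
`⟨r²⟩ = a²(1 + 3e²/2)`, `⟨X² - Y²⟩ = 5a²e²/2`, `⟨2XY⟩ = 0`, and the theorem follows by linearity.
-/

open Real

noncomputable def meanAnomalyAverage (e : ℝ) (f : ℝ → ℝ) : ℝ :=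
  (1 / (2 * π)) * ∫ E in (0:ℝ)..(2 * π), f E * (1 - e * cos E)

section MeanAnomalyAverage

variable {e : ℝ} {f g : ℝ → ℝ}

theorem meanAnomalyAverage_const_mul (c : ℝ) (f : ℝ → ℝ) :
    meanAnomalyAverage e (fun E => c * f E) = c * meanAnomalyAverage e f := by
  simp only [meanAnomalyAverage, mul_assoc, intervalIntegral.integral_const_mul]
  ring

theorem meanAnomalyAverage_add (hf : Continuous f) (hg : Continuous g) :
    meanAnomalyAverage e (fun E => f E + g E)
      = meanAnomalyAverage e f + meanAnomalyAverage e g := by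
  simp only [meanAnomalyAverage, add_mul]
  rw [intervalIntegral.integral_add, mul_add] <;>
    exact Continuous.intervalIntegrable (by fun_prop) _ _

theorem meanAnomalyAverage_sub (hf : Continuous f) (hg : Continuous g) :
    meanAnomalyAverage e (fun E => f E - g E)
      = meanAnomalyAverage e f - meanAnomalyAverage e g := by
  simp only [meanAnomalyAverage, sub_mul]
  rw [intervalIntegral.integral_sub, mul_sub] <;>
    exact Continuous.intervalIntegrable (by fun_prop) _ _

end MeanAnomalyAverage

-- The antiderivative below is `2π`-periodic except for its term `(k₀ + k₂ / 2) E`.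
theorem integral_cos_cubic_add_sin_mul_cos_quadratic (k₀ k₁ k₂ k₃ m₀ m₁ m₂ : ℝ) :
    ∫ E in (0:ℝ)..(2 * π), (k₀ + k₁ * cos E + k₂ * cos E ^ 2 + k₃ * cos E ^ 3
        + sin E * (m₀ + m₁ * cos E + m₂ * cos E ^ 2)) = 2 * π * (k₀ + k₂ / 2) := by
  have hderiv : ∀ E ∈ Set.uIcc (0:ℝ) (2 * π),
      HasDerivAt (fun E => (k₀ + k₂ / 2) * E + (k₁ + 2 * k₃ / 3) * sin E
          + k₂ / 2 * (sin E * cos E) + k₃ / 3 * (sin E * cos E ^ 2)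
          - m₀ * cos E - m₁ / 2 * cos E ^ 2 - m₂ / 3 * cos E ^ 3)
        (k₀ + k₁ * cos E + k₂ * cos E ^ 2 + k₃ * cos E ^ 3
          + sin E * (m₀ + m₁ * cos E + m₂ * cos E ^ 2)) E := by
    intro E _
    have H := (((((((hasDerivAt_id E).const_mul (k₀ + k₂ / 2)).add
        ((hasDerivAt_sin E).const_mul (k₁ + 2 * k₃ / 3))).add
        (((hasDerivAt_sin E).mul (hasDerivAt_cos E)).const_mul (k₂ / 2))).add
        (((hasDerivAt_sin E).mul ((hasDerivAt_cos E).pow 2)).const_mul (k₃ / 3))).sub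
        ((hasDerivAt_cos E).const_mul m₀)).sub
        (((hasDerivAt_cos E).pow 2).const_mul (m₁ / 2))).sub
        (((hasDerivAt_cos E).pow 3).const_mul (m₂ / 3))
    refine H.congr_deriv ?_
    push_cast [Pi.pow_apply]
    linear_combination (-(k₂ / 2) - 2 * k₃ / 3 * cos E) * sin_sq_add_cos_sq E
  rw [intervalIntegral.integral_eq_sub_of_hasDerivAt hderiv
    (Continuous.intervalIntegrable (by fun_prop) _ _)]
  simp only [sin_two_pi, cos_two_pi, sin_zero, cos_zero]
  ring

theorem meanAnomalyAverage_eq_of_forall_eq {e : ℝ} {f : ℝ → ℝ} (k₀ k₁ k₂ k₃ m₀ m₁ m₂ : ℝ)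
    (hf : ∀ E, f E * (1 - e * cos E) = k₀ + k₁ * cos E + k₂ * cos E ^ 2 + k₃ * cos E ^ 3
        + sin E * (m₀ + m₁ * cos E + m₂ * cos E ^ 2)) :
    meanAnomalyAverage e f = k₀ + k₂ / 2 := by
  rw [meanAnomalyAverage, intervalIntegral.integral_congr fun E _ => hf E,
    integral_cos_cubic_add_sin_mul_cos_quadratic]
  field_simp

section KeplerEllipse

variable (a : ℝ) {e : ℝ}

theorem meanAnomalyAverage_radius_sq :
    meanAnomalyAverage e (fun E => (a * (1 - e * cos E)) ^ 2) = a ^ 2 * (1 + 3 / 2 * e ^ 2) := by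
  rw [meanAnomalyAverage_eq_of_forall_eq (a ^ 2) (-3 * a ^ 2 * e) (3 * a ^ 2 * e ^ 2)
    (-a ^ 2 * e ^ 3) 0 0 0 fun E => by ring]
  ring

theorem meanAnomalyAverage_sq_sub_sq (he : e ^ 2 ≤ 1) :
    meanAnomalyAverage e (fun E => (a * (cos E - e)) ^ 2 - (a * √(1 - e ^ 2) * sin E) ^ 2)
      = 5 / 2 * a ^ 2 * e ^ 2 := by
  have hs : √(1 - e ^ 2) ^ 2 = 1 - e ^ 2 := sq_sqrt (by linarith)
  rw [meanAnomalyAverage_eq_of_forall_eq (a ^ 2 * (2 * e ^ 2 - 1)) (-a ^ 2 * (e + 2 * e ^ 3))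
    (a ^ 2 * (2 + e ^ 2)) (a ^ 2 * (e ^ 3 - 2 * e)) 0 0 0 fun E => by
      linear_combination (-a ^ 2 * (1 - e * cos E)) * (sin E ^ 2 * hs + (1 - e ^ 2) * sin_sq E)]
  ring

theorem meanAnomalyAverage_two_mul_mul :
    meanAnomalyAverage e (fun E => 2 * (a * (cos E - e)) * (a * √(1 - e ^ 2) * sin E)) = 0 := by
  set s := √(1 - e ^ 2)
  rw [meanAnomalyAverage_eq_of_forall_eq 0 0 0 0 (-2 * a ^ 2 * s * e) (2 * a ^ 2 * s * (1 + e ^ 2))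
    (-2 * a ^ 2 * s * e) fun E => by ring]
  ring

end KeplerEllipse

theorem averaged_quadratic_zeeman_general
    (a e i ω : ℝ) (he0 : 0 ≤ e) (he1 : e < 1) :
    (1 / (2 * π)) * ∫ E in (0:ℝ)..(2 * π),
        ((1 / 16) * ((1 + Real.cos i ^ 2) * (a * (1 - e * Real.cos E)) ^ 2
          + Real.sin i ^ 2 *
            (Real.cos (2 * ω) * ((a * (Real.cos E - e)) ^ 2
                - (a * Real.sqrt (1 - e ^ 2) * Real.sin E) ^ 2)
              - Real.sin (2 * ω) * (2 * (a * (Real.cos E - e))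
                  * (a * Real.sqrt (1 - e ^ 2) * Real.sin E)))))
          * (1 - e * Real.cos E)
      = (a ^ 2 / 16) * ((1 + Real.cos i ^ 2) * (1 + (3 / 2) * e ^ 2)
          + (5 / 2) * e ^ 2 * Real.sin i ^ 2 * Real.cos (2 * ω)) := by
  have he : e ^ 2 ≤ 1 := by nlinarith
  change meanAnomalyAverage e _ = _
  rw [meanAnomalyAverage_const_mul, meanAnomalyAverage_add (by fun_prop) (by fun_prop),
    meanAnomalyAverage_const_mul, meanAnomalyAverage_const_mul,
    meanAnomalyAverage_sub (by fun_prop) (by fun_prop), meanAnomalyAverage_const_mul,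
    meanAnomalyAverage_const_mul, meanAnomalyAverage_radius_sq, meanAnomalyAverage_sq_sub_sq a he,
    meanAnomalyAverage_two_mul_mul]
  ring

/-- The average over the mean anomaly of the quadratic Zeeman perturbation
`H₁ = (1/16)[(1 + cos²i) r² + sin²i (cos 2ω (X² − Y²) − 2 sin 2ω · XY)]`
equals `(a²/16)[(1 + cos²i)(1 + (3/2)e²) + (5/2) e² sin²i cos 2ω]`. -/
theorem averaged_quadratic_zeeman
    (a e i ω : ℝ) (ha : 0 < a) (he0 : 0 ≤ e) (he1 : e < 1) :
    (1 / (2 * π)) * ∫ E in (0:ℝ)..(2 * π),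
        ((1 / 16) * ((1 + Real.cos i ^ 2) * (a * (1 - e * Real.cos E)) ^ 2
          + Real.sin i ^ 2 *
            (Real.cos (2 * ω) * ((a * (Real.cos E - e)) ^ 2
                - (a * Real.sqrt (1 - e ^ 2) * Real.sin E) ^ 2)
              - Real.sin (2 * ω) * (2 * (a * (Real.cos E - e))
                  * (a * Real.sqrt (1 - e ^ 2) * Real.sin E)))))
          * (1 - e * Real.cos E)
      = (a ^ 2 / 16) * ((1 + Real.cos i ^ 2) * (1 + (3 / 2) * e ^ 2)
          + (5 / 2) * e ^ 2 * Real.sin i ^ 2 * Real.cos (2 * ω)) :=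
  averaged_quadratic_zeeman_general a e i ω he0 he1
end

section
/- Fix Λ > 0 and K with 0 < |K| < Λ. For G ∈ (|K|, Λ) and ω ∈ ℝ define h(G, ω) = (1 + K²/G²)(1 + (3/2)(1 − G²/Λ²)) + (5/2)(1 − G²/Λ²)(1 − K²/G²) cos 2ω (the averaged quadratic Zeeman Hamiltonian with e² = 1 − G²/Λ² and cos i = K/G). Then for ω ∈ {π/2, 3π/2} and G = (√5 |K| Λ)^{1/2}, both partial derivatives ∂h/∂G and ∂h/∂ω vanish; moreover this value of G satisfies |K| < G < Λ if and only if |K| < Λ/√5. -/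
/-!
On the lines `cos 2ω = -1` the `G`-derivative is `2G/Λ² - 10K²/G³`, which vanishes exactly
at `G⁴ = 5K²Λ²`, while the `ω`-derivative is a multiple of `sin 2ω = 0`. The interval
condition `|K| < G < Λ` reduces, after squaring, to `|K| < √5 Λ` and `√5 |K| < Λ`, and the
second implies the first.
-/

open Real

noncomputable def zeemanHamiltonian (Λ K G ω : ℝ) : ℝ :=
  (1 + K ^ 2 / G ^ 2) * (1 + (3 / 2) * (1 - G ^ 2 / Λ ^ 2))
    + (5 / 2) * (1 - G ^ 2 / Λ ^ 2) * (1 - K ^ 2 / G ^ 2) * cos (2 * ω)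

section Derivatives

variable (Λ K : ℝ) {G : ℝ} (ω : ℝ)

theorem hasDerivAt_zeemanHamiltonian_left (hG : G ≠ 0) :
    HasDerivAt (fun G => zeemanHamiltonian Λ K G ω)
      (5 * (cos (2 * ω) - 1) * K ^ 2 / G ^ 3 - (3 + 5 * cos (2 * ω)) * G / Λ ^ 2) G := by
  have hsq : HasDerivAt (fun G : ℝ => G ^ 2 / Λ ^ 2) (2 * G / Λ ^ 2) G := by
    simpa using (hasDerivAt_pow 2 G).div_const (Λ ^ 2)
  have hinv : HasDerivAt (fun G : ℝ => K ^ 2 / G ^ 2) (-2 * K ^ 2 / G ^ 3) G := by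
    refine ((hasDerivAt_const G _).div (hasDerivAt_pow 2 G) (pow_ne_zero 2 hG)).congr_deriv ?_
    field_simp
    ring
  have h : HasDerivAt (fun G => zeemanHamiltonian Λ K G ω) _ G :=
    ((hinv.const_add 1).mul (((hsq.const_sub 1).const_mul (3 / 2)).const_add 1)).add
      ((((hsq.const_sub 1).const_mul (5 / 2)).mul (hinv.const_sub 1)).mul_const (cos (2 * ω)))
  refine h.congr_deriv ?_
  field_simp
  ring

theorem hasDerivAt_zeemanHamiltonian_right :
    HasDerivAt (zeemanHamiltonian Λ K G)
      (-5 * (1 - G ^ 2 / Λ ^ 2) * (1 - K ^ 2 / G ^ 2) * sin (2 * ω)) ω := by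
  have hcos : HasDerivAt (fun ω => cos (2 * ω)) (-sin (2 * ω) * 2) ω := by
    simpa using (hasDerivAt_id ω).const_mul 2 |>.cos
  refine ((hcos.const_mul ((5 / 2) * (1 - G ^ 2 / Λ ^ 2) * (1 - K ^ 2 / G ^ 2))).const_add
    ((1 + K ^ 2 / G ^ 2) * (1 + (3 / 2) * (1 - G ^ 2 / Λ ^ 2)))).congr_deriv ?_
  ring

end Derivatives

theorem deriv_zeemanHamiltonian_left_eq_zero {Λ K G ω : ℝ} (hΛ : Λ ≠ 0) (hG : G ≠ 0)
    (hω : cos (2 * ω) = -1) (hG4 : G ^ 4 = 5 * K ^ 2 * Λ ^ 2) :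
    deriv (fun G => zeemanHamiltonian Λ K G ω) G = 0 := by
  rw [(hasDerivAt_zeemanHamiltonian_left Λ K ω hG).deriv, hω]
  field_simp
  linear_combination 2 * hG4

theorem cos_two_mul_eq_neg_one_of_mem {ω : ℝ} (hω : ω ∈ ({π / 2, 3 * π / 2} : Set ℝ)) :
    cos (2 * ω) = -1 := by
  rcases hω with rfl | rfl
  · rw [show 2 * (π / 2) = π by ring, cos_pi]
  · rw [show 2 * (3 * π / 2) = π + 2 * π by ring, cos_add_two_pi, cos_pi]

theorem lt_sqrt_mul_and_sqrt_mul_lt_iff {a b c : ℝ} (ha : 0 < a) (hb : 0 < b) (hc : 1 ≤ c) :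
    (a < √(c * a * b) ∧ √(c * a * b) < b) ↔ a < b / c := by
  have hc₀ : 0 < c := one_pos.trans_le hc
  rw [lt_sqrt ha.le, sqrt_lt' hb, lt_div_iff₀ hc₀]
  constructor
  · rintro ⟨-, h⟩
    nlinarith
  · intro h
    constructor <;> nlinarith [mul_le_mul_of_nonneg_left hc hb.le]

theorem zeeman_z_orbit_critical_points_general
    (Λ K : ℝ) (hΛ : 0 < Λ) (hK : 0 < |K|)
    (h : ℝ → ℝ → ℝ)
    (hdef : ∀ G ω, h G ω =
      (1 + K ^ 2 / G ^ 2) * (1 + (3 / 2) * (1 - G ^ 2 / Λ ^ 2))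
        + (5 / 2) * (1 - G ^ 2 / Λ ^ 2) * (1 - K ^ 2 / G ^ 2) * Real.cos (2 * ω)) :
    (∀ ω ∈ ({π / 2, 3 * π / 2} : Set ℝ),
      deriv (fun G => h G ω) (Real.sqrt (Real.sqrt 5 * |K| * Λ)) = 0 ∧
      deriv (fun ω' => h (Real.sqrt (Real.sqrt 5 * |K| * Λ)) ω') ω = 0) ∧
    ((|K| < Real.sqrt (Real.sqrt 5 * |K| * Λ) ∧ Real.sqrt (Real.sqrt 5 * |K| * Λ) < Λ)
      ↔ |K| < Λ / Real.sqrt 5) := by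
  obtain rfl : h = zeemanHamiltonian Λ K := funext fun G => funext (hdef G)
  set G₀ := √(√5 * |K| * Λ)
  have hG₀ : 0 < G₀ := sqrt_pos.2 (by positivity)
  have hG₀4 : G₀ ^ 4 = 5 * K ^ 2 * Λ ^ 2 := by
    rw [show G₀ ^ 4 = (G₀ ^ 2) ^ 2 by ring, sq_sqrt (by positivity), mul_pow, mul_pow,
      sq_sqrt (by norm_num), sq_abs]
  refine ⟨fun ω hω => ?_, lt_sqrt_mul_and_sqrt_mul_lt_iff hK hΛ (one_le_sqrt.2 (by norm_num))⟩
  have hcos := cos_two_mul_eq_neg_one_of_mem hω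
  have hsin : sin (2 * ω) = 0 := sin_eq_zero_iff_cos_eq.2 (.inr hcos)
  refine ⟨deriv_zeemanHamiltonian_left_eq_zero hΛ.ne' hG₀.ne' hcos hG₀4, ?_⟩
  rw [(hasDerivAt_zeemanHamiltonian_right Λ K ω).deriv, hsin, mul_zero]

/-- The averaged quadratic Zeeman Hamiltonian
`h(G,ω) = (1 + K²/G²)(1 + (3/2)(1 − G²/Λ²)) + (5/2)(1 − G²/Λ²)(1 − K²/G²) cos 2ω`
has critical points (the Z-orbits) at `ω ∈ {π/2, 3π/2}`, `G = (√5 |K| Λ)^{1/2}`,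
and this value of `G` lies in `(|K|, Λ)` exactly when `|K| < Λ/√5`. -/
theorem zeeman_z_orbit_critical_points
    (Λ K : ℝ) (hΛ : 0 < Λ) (hK : 0 < |K|) (hKΛ : |K| < Λ)
    (h : ℝ → ℝ → ℝ)
    (hdef : ∀ G ω, h G ω =
      (1 + K ^ 2 / G ^ 2) * (1 + (3 / 2) * (1 - G ^ 2 / Λ ^ 2))
        + (5 / 2) * (1 - G ^ 2 / Λ ^ 2) * (1 - K ^ 2 / G ^ 2) * Real.cos (2 * ω)) :
    (∀ ω ∈ ({π / 2, 3 * π / 2} : Set ℝ),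
      deriv (fun G => h G ω) (Real.sqrt (Real.sqrt 5 * |K| * Λ)) = 0 ∧
      deriv (fun ω' => h (Real.sqrt (Real.sqrt 5 * |K| * Λ)) ω') ω = 0) ∧
    ((|K| < Real.sqrt (Real.sqrt 5 * |K| * Λ) ∧ Real.sqrt (Real.sqrt 5 * |K| * Λ) < Λ)
      ↔ |K| < Λ / Real.sqrt 5) :=
  zeeman_z_orbit_critical_points_general Λ K hΛ hK h hdef
end

section
/- Fix Λ > 0, F ≠ 0, and K with 0 < |K| < Λ. For G ∈ (|K|, Λ) and ω ∈ ℝ define the averaged Stark Hamiltonian h(G, ω) = −(3/2) F Λ² e sin i sin ω, with e = √(1 − G²/Λ²) and sin i = √(1 − K²/G²). Then for ω ∈ {π/2, 3π/2} and G = (|K| Λ)^{1/2}, both partial derivatives ∂h/∂G and ∂h/∂ω vanish, and at this point e = sin i = √(1 − |K|/Λ). -/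
/-!
At `ω = π/2, 3π/2` we have `cos ω = 0`, so `∂h/∂ω = 0`. For `∂h/∂G`, write `h` as a constant
times `√u · √v · sin ω` with `u = e² = 1 - G²/Λ²` and `v = sin² i = 1 - K²/G²`. At `G₀² = |K| Λ`
both `u` and `v` equal `1 - |K|/Λ > 0`, so the derivative of `√u · √v` there is `(u' + v')/2`,
and `u' + v' = -2G₀/Λ² + 2K²/G₀³` vanishes exactly because `G₀⁴ = K² Λ²`.
-/

open Real

lemma hasDerivAt_sqrt_mul_sqrt_of_eq {u v : ℝ → ℝ} {u' v' x : ℝ} (hu : HasDerivAt u u' x)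
    (hv : HasDerivAt v v' x) (huv : u x = v x) (hpos : 0 < u x) :
    HasDerivAt (fun y => √(u y) * √(v y)) ((u' + v') / 2) x := by
  have hsqrt : √(u x) ≠ 0 := (sqrt_pos.mpr hpos).ne'
  refine ((hu.sqrt hpos.ne').mul (hv.sqrt (huv ▸ hpos.ne'))).congr_deriv ?_
  rw [← huv]
  field_simp

lemma hasDerivAt_one_sub_sq_div_sq (Λ G : ℝ) :
    HasDerivAt (fun G : ℝ => 1 - G ^ 2 / Λ ^ 2) (-(2 * G / Λ ^ 2)) G := by
  simpa using ((hasDerivAt_pow 2 G).div_const (Λ ^ 2)).const_sub 1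

lemma hasDerivAt_one_sub_div_sq (K : ℝ) {G : ℝ} (hG : G ≠ 0) :
    HasDerivAt (fun G : ℝ => 1 - K ^ 2 / G ^ 2) (2 * K ^ 2 / G ^ 3) G := by
  have hquot := (hasDerivAt_const G (K ^ 2)).div (hasDerivAt_pow 2 G) (pow_ne_zero 2 hG)
  refine (hquot.const_sub 1).congr_deriv ?_
  field_simp
  ring

section SOrbit

variable {Λ K : ℝ}

lemma one_sub_sqrt_sq_div_sq (hΛ : 0 < Λ) :
    1 - √(|K| * Λ) ^ 2 / Λ ^ 2 = 1 - |K| / Λ := by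
  rw [sq_sqrt (by positivity)]
  field_simp

lemma one_sub_sq_div_sqrt_sq (hΛ : 0 < Λ) (hK : 0 < |K|) :
    1 - K ^ 2 / √(|K| * Λ) ^ 2 = 1 - |K| / Λ := by
  rw [sq_sqrt (by positivity), ← sq_abs K]
  field_simp

lemma hasDerivAt_eccentricity_mul_sin_inclination (hΛ : 0 < Λ) (hK : 0 < |K|) (hKΛ : |K| < Λ) :
    HasDerivAt (fun G => √(1 - G ^ 2 / Λ ^ 2) * √(1 - K ^ 2 / G ^ 2)) 0 (√(|K| * Λ)) := by
  set G₀ := √(|K| * Λ)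
  have hG₀ : 0 < G₀ := sqrt_pos.mpr (by positivity)
  have hG₀_sq : G₀ ^ 2 = |K| * Λ := sq_sqrt (by positivity)
  have hpos : 0 < 1 - |K| / Λ := sub_pos.mpr ((div_lt_one hΛ).mpr hKΛ)
  have hsum : -(2 * G₀ / Λ ^ 2) + 2 * K ^ 2 / G₀ ^ 3 = 0 := by
    have hG₀_four : G₀ * G₀ ^ 3 = K ^ 2 * Λ ^ 2 := by
      rw [← sq_abs K]; linear_combination (G₀ ^ 2 + |K| * Λ) * hG₀_sq
    field_simp
    linear_combination (-2) * hG₀_four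
  simpa [hsum] using hasDerivAt_sqrt_mul_sqrt_of_eq (hasDerivAt_one_sub_sq_div_sq Λ G₀)
    (hasDerivAt_one_sub_div_sq K hG₀.ne')
    ((one_sub_sqrt_sq_div_sq hΛ).trans (one_sub_sq_div_sqrt_sq hΛ hK).symm)
    ((one_sub_sqrt_sq_div_sq hΛ).symm ▸ hpos)

end SOrbit

lemma cos_eq_zero_of_mem_pi_div_two {ω : ℝ} (hω : ω ∈ ({π / 2, 3 * π / 2} : Set ℝ)) :
    cos ω = 0 := by
  rcases hω with rfl | rfl
  · exact cos_pi_div_two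
  · rw [show 3 * π / 2 = π / 2 + π by ring, cos_add_pi, cos_pi_div_two, neg_zero]

theorem stark_s_orbit_critical_points_general
    (Λ F K : ℝ) (hΛ : 0 < Λ) (hK : 0 < |K|) (hKΛ : |K| < Λ)
    (h : ℝ → ℝ → ℝ)
    (hdef : ∀ G ω, h G ω = -(3 / 2) * F * Λ ^ 2 * Real.sqrt (1 - G ^ 2 / Λ ^ 2)
        * Real.sqrt (1 - K ^ 2 / G ^ 2) * Real.sin ω) :
    ∀ ω ∈ ({π / 2, 3 * π / 2} : Set ℝ),
      deriv (fun G => h G ω) (Real.sqrt (|K| * Λ)) = 0 ∧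
      deriv (fun ω' => h (Real.sqrt (|K| * Λ)) ω') ω = 0 ∧
      Real.sqrt (1 - (Real.sqrt (|K| * Λ)) ^ 2 / Λ ^ 2) = Real.sqrt (1 - |K| / Λ) ∧
      Real.sqrt (1 - K ^ 2 / (Real.sqrt (|K| * Λ)) ^ 2) = Real.sqrt (1 - |K| / Λ) := by
  intro ω hω
  have hG : HasDerivAt (fun G => h G ω) 0 (√(|K| * Λ)) := by
    have hfun : (fun G => h G ω) = fun G =>
        -(3 / 2) * F * Λ ^ 2 * (√(1 - G ^ 2 / Λ ^ 2) * √(1 - K ^ 2 / G ^ 2)) * sin ω :=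
      funext fun G => by rw [hdef]; ring
    rw [hfun]
    exact (((hasDerivAt_eccentricity_mul_sin_inclination hΛ hK hKΛ).const_mul _).mul_const
      _).congr_deriv (by simp)
  have hω' : HasDerivAt (fun ω' => h (√(|K| * Λ)) ω') 0 ω := by
    simp_rw [hdef]
    exact ((hasDerivAt_sin ω).const_mul _).congr_deriv
      (by rw [cos_eq_zero_of_mem_pi_div_two hω, mul_zero])
  exact ⟨hG.deriv, hω'.deriv, by rw [one_sub_sqrt_sq_div_sq hΛ],
    by rw [one_sub_sq_div_sqrt_sq hΛ hK]⟩

/-- The averaged Stark Hamiltonian `h(G,ω) = −(3/2) F Λ² e sin i sin ω`, with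
`e = √(1 − G²/Λ²)` and `sin i = √(1 − K²/G²)`, has critical points (the S-orbits)
at `ω ∈ {π/2, 3π/2}`, `G = (|K| Λ)^{1/2}`, where `e = sin i = √(1 − |K|/Λ)`. -/
theorem stark_s_orbit_critical_points
    (Λ F K : ℝ) (hΛ : 0 < Λ) (hF : F ≠ 0) (hK : 0 < |K|) (hKΛ : |K| < Λ)
    (h : ℝ → ℝ → ℝ)
    (hdef : ∀ G ω, h G ω = -(3 / 2) * F * Λ ^ 2 * Real.sqrt (1 - G ^ 2 / Λ ^ 2)
        * Real.sqrt (1 - K ^ 2 / G ^ 2) * Real.sin ω) :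
    ∀ ω ∈ ({π / 2, 3 * π / 2} : Set ℝ),
      deriv (fun G => h G ω) (Real.sqrt (|K| * Λ)) = 0 ∧
      deriv (fun ω' => h (Real.sqrt (|K| * Λ)) ω') ω = 0 ∧
      Real.sqrt (1 - (Real.sqrt (|K| * Λ)) ^ 2 / Λ ^ 2) = Real.sqrt (1 - |K| / Λ) ∧
      Real.sqrt (1 - K ^ 2 / (Real.sqrt (|K| * Λ)) ^ 2) = Real.sqrt (1 - |K| / Λ) :=
  stark_s_orbit_critical_points_general Λ F K hΛ hK hKΛ h hdef
end

section
/- Let e ∈ [0,1) and i, ω ∈ ℝ. Then e |sin i| |sin ω| ≤ 1 − √(1−e²) |cos i|. Equivalently, for Λ > 0 and |K| ≤ G ≤ Λ with G > 0, setting e = √(1 − G²/Λ²) and sin i = √(1 − K²/G²), one has e sin i |sin ω| ≤ 1 − |K|/Λ; and if 0 < |K| < Λ, equality holds if and only if |sin ω| = 1 and G² = |K| Λ (equivalently e = sin i = √(1 − |K|/Λ)). -/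
open Real

/-! Both inequalities are the Cauchy–Schwarz inequality `a c + b d ≤ 1` for two unit vectors
`(a, b)`, `(c, d)` of the plane, with equality exactly when the vectors coincide: first for
`(e, √(1 - e²))` and `(|sin i|, |cos i|)`, then for `(x, √(1 - x²))` and
`(y, √(1 - y²))` with `x = G / Λ`, `y = |K| / G`, where `x y = |K| / Λ` and `x = y` is the
S-orbit condition `G² = |K| Λ`. -/

section UnitVectors

variable {a b c d : ℝ}

lemma mul_add_mul_le_one (hab : a ^ 2 + b ^ 2 = 1) (hcd : c ^ 2 + d ^ 2 = 1) :
    a * c + b * d ≤ 1 := by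
  nlinarith [sq_nonneg (a - c), sq_nonneg (b - d)]

lemma mul_add_mul_eq_one_iff (hab : a ^ 2 + b ^ 2 = 1) (hcd : c ^ 2 + d ^ 2 = 1) :
    a * c + b * d = 1 ↔ a = c ∧ b = d := by
  constructor
  · intro h
    have hsum : (a - c) ^ 2 + (b - d) ^ 2 = 0 := by linear_combination hab + hcd - 2 * h
    obtain ⟨hac, hbd⟩ := (add_eq_zero_iff_of_nonneg (sq_nonneg _) (sq_nonneg _)).mp hsum
    exact ⟨sub_eq_zero.mp (pow_eq_zero_iff two_ne_zero |>.mp hac),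
      sub_eq_zero.mp (pow_eq_zero_iff two_ne_zero |>.mp hbd)⟩
  · rintro ⟨rfl, rfl⟩
    linear_combination hab

end UnitVectors

lemma sq_add_sqrt_one_sub_sq_sq {x : ℝ} (hx : |x| ≤ 1) : x ^ 2 + √(1 - x ^ 2) ^ 2 = 1 := by
  rw [sq_sqrt (by nlinarith [sq_abs x, abs_nonneg x])]
  ring

section SqrtOneSubSq

variable {x y : ℝ}

lemma sqrt_one_sub_sq_mul_le (hx : |x| ≤ 1) (hy : |y| ≤ 1) :
    √(1 - x ^ 2) * √(1 - y ^ 2) ≤ 1 - x * y := by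
  linarith [mul_add_mul_le_one (sq_add_sqrt_one_sub_sq_sq hx) (sq_add_sqrt_one_sub_sq_sq hy)]

lemma sqrt_one_sub_sq_mul_eq_iff (hx : |x| ≤ 1) (hy : |y| ≤ 1) :
    √(1 - x ^ 2) * √(1 - y ^ 2) = 1 - x * y ↔ x = y := by
  have hcs := mul_add_mul_eq_one_iff (sq_add_sqrt_one_sub_sq_sq hx) (sq_add_sqrt_one_sub_sq_sq hy)
  constructor
  · intro h
    exact (hcs.mp (by linarith)).1
  · rintro rfl
    linarith [hcs.mpr ⟨rfl, rfl⟩]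

end SqrtOneSubSq

lemma mul_eq_iff_of_le_of_le_one {p q t : ℝ} (hp : 0 ≤ p) (hpq : p ≤ q) (hq : 0 < q)
    (ht : t ≤ 1) : p * t = q ↔ t = 1 ∧ p = q := by
  constructor
  · intro h
    have hpq' : p = q := le_antisymm hpq (h ▸ mul_le_of_le_one_right hp ht)
    subst hpq'
    exact ⟨(mul_eq_left₀ hq.ne').mp h, rfl⟩
  · rintro ⟨rfl, rfl⟩
    exact mul_one p

/-- The electric action bound: `e |sin i| |sin ω| ≤ 1 − √(1−e²)|cos i|`; equivalently,
in Delaunay actions with `e = √(1 − G²/Λ²)`, `sin i = √(1 − K²/G²)`, one has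
`e sin i |sin ω| ≤ 1 − |K|/Λ`, with equality (for `0 < |K| < Λ`) iff `|sin ω| = 1`
and `G² = |K| Λ`. -/
theorem electric_action_bound :
    (∀ e i ω : ℝ, 0 ≤ e → e < 1 →
      e * |Real.sin i| * |Real.sin ω| ≤ 1 - Real.sqrt (1 - e ^ 2) * |Real.cos i|) ∧
    (∀ Λ G K ω : ℝ, 0 < Λ → 0 < G → |K| ≤ G → G ≤ Λ →
      Real.sqrt (1 - G ^ 2 / Λ ^ 2) * Real.sqrt (1 - K ^ 2 / G ^ 2) * |Real.sin ω|
        ≤ 1 - |K| / Λ ∧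
      (0 < |K| → |K| < Λ →
        (Real.sqrt (1 - G ^ 2 / Λ ^ 2) * Real.sqrt (1 - K ^ 2 / G ^ 2) * |Real.sin ω|
            = 1 - |K| / Λ
          ↔ |Real.sin ω| = 1 ∧ G ^ 2 = |K| * Λ))) := by
  constructor
  · intro e i ω he0 he1
    have he : |e| ≤ 1 := abs_le.mpr ⟨by linarith, he1.le⟩
    have hcs := mul_add_mul_le_one (sq_add_sqrt_one_sub_sq_sq he)
      (show |sin i| ^ 2 + |cos i| ^ 2 = 1 by rw [sq_abs, sq_abs, sin_sq_add_cos_sq])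
    have hω : e * |sin i| * |sin ω| ≤ e * |sin i| :=
      mul_le_of_le_one_right (by positivity) (abs_sin_le_one ω)
    linarith
  · intro Λ G K ω hΛ hG hKG hGΛ
    set x := G / Λ
    set y := |K| / G
    have hx : |x| ≤ 1 := by
      rw [abs_of_nonneg (by positivity)]; exact div_le_one_of_le₀ hGΛ hΛ.le
    have hy : |y| ≤ 1 := by
      rw [abs_of_nonneg (by positivity)]; exact div_le_one_of_le₀ hKG hG.le
    have hxy : x * y = |K| / Λ := by
      rw [div_mul_div_comm, mul_comm G, mul_div_mul_right _ _ hG.ne']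
    rw [show G ^ 2 / Λ ^ 2 = x ^ 2 by rw [div_pow], show K ^ 2 / G ^ 2 = y ^ 2 by
      rw [div_pow, sq_abs], ← hxy]
    have hbound := sqrt_one_sub_sq_mul_le hx hy
    refine ⟨(mul_le_of_le_one_right (by positivity) (abs_sin_le_one ω)).trans hbound,
      fun _ hKΛ => ?_⟩
    have hpos : 0 < 1 - x * y := by rw [hxy, sub_pos, div_lt_one hΛ]; exact hKΛ
    rw [mul_eq_iff_of_le_of_le_one (by positivity) hbound hpos (abs_sin_le_one ω),
      sqrt_one_sub_sq_mul_eq_iff hx hy, div_eq_div_iff hΛ.ne' hG.ne', sq, eq_comm (b := |K| * Λ)]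
end

section
/- Let a > b > 0 and define ρ(θ) = (√(a² − b²)/2) ∫₀^θ dθ′/(a − b cos θ′) for θ ∈ ℝ. Then for all θ ∈ ℝ: cos ρ(θ) = √(a − b) cos(θ/2)/√(a − b cos θ) and sin ρ(θ) = √(a + b) sin(θ/2)/√(a − b cos θ); in particular, for −π < θ < π one has ρ(θ) = arctan(√((a+b)/(a−b)) tan(θ/2)) (with ρ(±π) = ±π/2 by continuity), and ρ(θ + 2π) = ρ(θ) + π for all θ ∈ ℝ. -/
/-!
The point `(√(a - b) cos (θ/2), √(a + b) sin (θ/2))` runs over an ellipse, its squared norm is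
`a - b cos θ`, and its angular velocity is `√(a² - b²) / (2 (a - b cos θ)) = ρ'(θ)`.
Hence the normalized point and `(cos ρ, sin ρ)` solve the same rotation equation
`u' = -ρ' v, v' = ρ' u` and agree at `θ = 0`, so they coincide. On `(-π, π)` the cosine of `ρ`
is positive and `ρ 0 = 0`, so `ρ` stays in `(-π/2, π/2)`, where `arctan` inverts `tan`; by
continuity `ρ(±π) = ±π/2`. Finally `ρ(θ + 2π) - ρ(θ)` is the integral over a full period,
i.e. `ρ(π) - ρ(-π) = π`.
-/

open Real Set

section Normalize

variable {x y : ℝ → ℝ} {x' y' t : ℝ}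

theorem HasDerivAt.div_sqrt_sq_add_sq (hx : HasDerivAt x x' t) (hy : HasDerivAt y y' t)
    (h : 0 < x t ^ 2 + y t ^ 2) :
    HasDerivAt (fun s => x s / √(x s ^ 2 + y s ^ 2))
      (-((x t * y' - y t * x') / (x t ^ 2 + y t ^ 2) * (y t / √(x t ^ 2 + y t ^ 2)))) t := by
  have hr := ((hx.fun_pow 2).fun_add (hy.fun_pow 2)).sqrt h.ne'
  have hsq := sq_sqrt h.le
  have hpos := sqrt_pos.2 h
  refine (hx.fun_div hr hpos.ne').congr_deriv ?_
  simp only [Nat.cast_ofNat, Nat.add_one_sub_one, pow_one]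
  field_simp
  linear_combination ((x t ^ 2 + y t ^ 2) * x' + y t * (x t * y' - x' * y t)) * hsq

theorem HasDerivAt.div_sqrt_sq_add_sq' (hx : HasDerivAt x x' t) (hy : HasDerivAt y y' t)
    (h : 0 < x t ^ 2 + y t ^ 2) :
    HasDerivAt (fun s => y s / √(x s ^ 2 + y s ^ 2))
      ((x t * y' - y t * x') / (x t ^ 2 + y t ^ 2) * (x t / √(x t ^ 2 + y t ^ 2))) t := by
  have := hy.div_sqrt_sq_add_sq hx (by rwa [add_comm])
  simp only [add_comm (y _ ^ 2)] at this
  convert this using 1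
  ring

end Normalize

theorem cos_sin_eq_of_hasDerivAt {φ ω u v : ℝ → ℝ} (hφ : ∀ t, HasDerivAt φ (ω t) t)
    (hu : ∀ t, HasDerivAt u (-(ω t * v t)) t) (hv : ∀ t, HasDerivAt v (ω t * u t) t)
    {t₀ : ℝ} (hu₀ : u t₀ = cos (φ t₀)) (hv₀ : v t₀ = sin (φ t₀)) (t : ℝ) :
    u t = cos (φ t) ∧ v t = sin (φ t) := by
  have hE : ∀ s, HasDerivAt (fun s => (u s - cos (φ s)) ^ 2 + (v s - sin (φ s)) ^ 2) 0 s :=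
    fun s => by
      refine ((((hu s).fun_sub (hφ s).cos).fun_pow 2).fun_add
        (((hv s).fun_sub (hφ s).sin).fun_pow 2)).congr_deriv ?_
      simp only [Nat.cast_ofNat, Nat.add_one_sub_one, pow_one]
      ring
  have hEt : (u t - cos (φ t)) ^ 2 + (v t - sin (φ t)) ^ 2 = 0 := by
    rw [is_const_of_deriv_eq_zero (fun s => (hE s).differentiableAt) (fun s => (hE s).deriv) t t₀]
    simp [hu₀, hv₀]
  rw [add_eq_zero_iff_of_nonneg (sq_nonneg _) (sq_nonneg _)] at hEt
  simpa [sub_eq_zero] using hEt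

theorem mapsTo_Ioo_of_cos_pos {f : ℝ → ℝ} {s : Set ℝ} (hs : IsPreconnected s)
    (hf : ContinuousOn f s) {t₀ : ℝ} (ht₀ : t₀ ∈ s) (hft₀ : f t₀ ∈ Ioo (-(π / 2)) (π / 2))
    (hcos : ∀ t ∈ s, 0 < cos (f t)) : MapsTo f s (Ioo (-(π / 2)) (π / 2)) := by
  have himage := hs.image f hf
  have hnot : ∀ t ∈ s, f t ≠ π / 2 ∧ f t ≠ -(π / 2) := fun t ht => by
    constructor <;> intro h <;> simpa [h] using hcos t ht
  intro t ht
  by_contra hout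
  rcases not_and_or.1 hout with hlow | hhigh
  · obtain ⟨t', ht', h⟩ := himage.Icc_subset (mem_image_of_mem f ht) (mem_image_of_mem f ht₀)
      ⟨not_lt.1 hlow, hft₀.1.le⟩
    exact (hnot t' ht').2 h
  · obtain ⟨t', ht', h⟩ := himage.Icc_subset (mem_image_of_mem f ht₀) (mem_image_of_mem f ht)
      ⟨hft₀.2.le, not_lt.1 hhigh⟩
    exact (hnot t' ht').1 h

noncomputable def rho (a b θ : ℝ) : ℝ :=
  √(a ^ 2 - b ^ 2) / 2 * ∫ t in (0 : ℝ)..θ, 1 / (a - b * cos t)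

section Rho

variable {a b : ℝ}

theorem sub_mul_cos_pos (h : |b| < a) (θ : ℝ) : 0 < a - b * cos θ := by
  have : |b * cos θ| ≤ |b| := by
    rw [abs_mul]; exact mul_le_of_le_one_right (abs_nonneg b) (abs_cos_le_one θ)
  linarith [le_abs_self (b * cos θ)]

theorem sub_mul_cos_eq_sq_add_sq (h : |b| < a) (θ : ℝ) :
    a - b * cos θ = (√(a - b) * cos (θ / 2)) ^ 2 + (√(a + b) * sin (θ / 2)) ^ 2 := by
  obtain ⟨hneg, hpos⟩ := abs_lt.1 h
  rw [mul_pow, mul_pow, sq_sqrt (by linarith), sq_sqrt (by linarith)]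
  have hcos : cos θ = cos (θ / 2) ^ 2 - sin (θ / 2) ^ 2 := by
    rw [← cos_two_mul', mul_div_cancel₀ θ two_ne_zero]
  linear_combination (-b) * hcos - a * sin_sq_add_cos_sq (θ / 2)

theorem continuous_one_div_sub_mul_cos (h : |b| < a) :
    Continuous fun t => 1 / (a - b * cos t) :=
  continuous_const.div (by fun_prop) fun t => (sub_mul_cos_pos h t).ne'

theorem hasDerivAt_rho (h : |b| < a) (θ : ℝ) :
    HasDerivAt (rho a b) (√(a ^ 2 - b ^ 2) / (2 * (a - b * cos θ))) θ := by
  have hf := continuous_one_div_sub_mul_cos h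
  refine ((intervalIntegral.integral_hasDerivAt_right (hf.intervalIntegrable _ _)
    (hf.stronglyMeasurableAtFilter _ _) hf.continuousAt).const_mul _).congr_deriv ?_
  field_simp

@[simp]
theorem rho_zero : rho a b 0 = 0 := by
  simp [rho]

theorem cos_rho_and_sin_rho (h : |b| < a) (θ : ℝ) :
    cos (rho a b θ) = √(a - b) * cos (θ / 2) / √(a - b * cos θ) ∧
    sin (rho a b θ) = √(a + b) * sin (θ / 2) / √(a - b * cos θ) := by
  have hsq := sub_mul_cos_eq_sq_add_sq h
  have hpos : ∀ t, 0 < (√(a - b) * cos (t / 2)) ^ 2 + (√(a + b) * sin (t / 2)) ^ 2 :=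
    fun t => hsq t ▸ sub_mul_cos_pos h t
  have hx : ∀ t, HasDerivAt (fun t => √(a - b) * cos (t / 2))
      (√(a - b) * (-sin (t / 2) * (1 / 2))) t :=
    fun t => (((hasDerivAt_id t).div_const 2).cos).const_mul _
  have hy : ∀ t, HasDerivAt (fun t => √(a + b) * sin (t / 2))
      (√(a + b) * (cos (t / 2) * (1 / 2))) t :=
    fun t => (((hasDerivAt_id t).div_const 2).sin).const_mul _
  have hω : ∀ t, (√(a - b) * cos (t / 2) * (√(a + b) * (cos (t / 2) * (1 / 2)))
      - √(a + b) * sin (t / 2) * (√(a - b) * (-sin (t / 2) * (1 / 2))))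
      / ((√(a - b) * cos (t / 2)) ^ 2 + (√(a + b) * sin (t / 2)) ^ 2)
      = √(a ^ 2 - b ^ 2) / (2 * (a - b * cos t)) := fun t => by
    rw [← hsq t, show a ^ 2 - b ^ 2 = (a - b) * (a + b) by ring,
      sqrt_mul (sub_nonneg.2 (abs_lt.1 h).2.le), mul_comm 2, ← div_div, div_right_comm]
    congr 1
    linear_combination √(a - b) * √(a + b) / 2 * sin_sq_add_cos_sq (t / 2)
  have hρ : ∀ t, HasDerivAt (rho a b) _ t := fun t => (hω t).symm ▸ hasDerivAt_rho h t
  have := cos_sin_eq_of_hasDerivAt hρ (fun t => (hx t).div_sqrt_sq_add_sq (hy t) (hpos t))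
    (fun t => (hx t).div_sqrt_sq_add_sq' (hy t) (hpos t)) (t₀ := 0) ?_ ?_ θ
  · rw [hsq θ]
    exact ⟨this.1.symm, this.2.symm⟩
  · simp [(sqrt_pos.2 (sub_pos.2 (abs_lt.1 h).2)).ne']
  · simp

theorem continuous_rho (h : |b| < a) : Continuous (rho a b) :=
  continuous_iff_continuousAt.2 fun θ => (hasDerivAt_rho h θ).continuousAt

theorem mapsTo_rho_Ioo (h : |b| < a) :
    MapsTo (rho a b) (Ioo (-π) π) (Ioo (-(π / 2)) (π / 2)) := by
  refine mapsTo_Ioo_of_cos_pos isPreconnected_Ioo (continuous_rho h).continuousOn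
    (t₀ := 0) ⟨by linarith [pi_pos], pi_pos⟩ (by simpa using pi_div_two_pos) fun θ hθ => ?_
  rw [(cos_rho_and_sin_rho h θ).1]
  have hcos : 0 < cos (θ / 2) := cos_pos_of_mem_Ioo ⟨by linarith [hθ.1], by linarith [hθ.2]⟩
  have := sub_mul_cos_pos h θ
  have : 0 < a - b := sub_pos.2 (abs_lt.1 h).2
  positivity

theorem mapsTo_rho_Icc (h : |b| < a) :
    MapsTo (rho a b) (Icc (-π) π) (Icc (-(π / 2)) (π / 2)) := by
  have hIcc : ∀ c : ℝ, 0 < c → Icc (-c) c = closure (Ioo (-c) c) := fun c hc =>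
    (closure_Ioo (by linarith)).symm
  rw [hIcc π pi_pos, hIcc (π / 2) pi_div_two_pos]
  exact (mapsTo_rho_Ioo h).closure (continuous_rho h)

theorem rho_pi (h : |b| < a) : rho a b π = π / 2 := by
  have hsin : sin (rho a b π) = 1 := by
    rw [(cos_rho_and_sin_rho h π).2, cos_pi, sin_pi_div_two, mul_one,
      show a - b * -1 = a + b by ring]
    exact div_self (sqrt_pos.2 (by linarith [abs_lt.1 h])).ne'
  obtain ⟨hlow, hhigh⟩ := mapsTo_rho_Icc h ⟨by linarith [pi_pos], le_rfl⟩
  rw [← arcsin_sin hlow hhigh, hsin, arcsin_one]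

theorem rho_neg_pi (h : |b| < a) : rho a b (-π) = -(π / 2) := by
  have hsin : sin (rho a b (-π)) = -1 := by
    rw [(cos_rho_and_sin_rho h (-π)).2, cos_neg, cos_pi, neg_div, sin_neg, sin_pi_div_two,
      mul_neg_one, show a - b * -1 = a + b by ring, neg_div, div_self (sqrt_pos.2 (by linarith [abs_lt.1 h])).ne']
  obtain ⟨hlow, hhigh⟩ := mapsTo_rho_Icc h ⟨le_rfl, by linarith [pi_pos]⟩
  rw [← arcsin_sin hlow hhigh, hsin, arcsin_neg, arcsin_one]

theorem tan_rho (h : |b| < a) (θ : ℝ) :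
    tan (rho a b θ) = √((a + b) / (a - b)) * tan (θ / 2) := by
  obtain ⟨hcos, hsin⟩ := cos_rho_and_sin_rho h θ
  have hP := (sqrt_pos.2 (sub_mul_cos_pos h θ)).ne'
  rw [tan_eq_sin_div_cos, hcos, hsin, div_div_div_cancel_right₀ hP, tan_eq_sin_div_cos,
    sqrt_div' _ (sub_nonneg.2 (abs_lt.1 h).2.le)]
  ring

theorem rho_eq_arctan (h : |b| < a) {θ : ℝ} (hθ : θ ∈ Ioo (-π) π) :
    rho a b θ = arctan (√((a + b) / (a - b)) * tan (θ / 2)) := by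
  obtain ⟨hlow, hhigh⟩ := mapsTo_rho_Ioo h hθ
  rw [← tan_rho h, arctan_tan hlow hhigh]

theorem rho_add_two_pi (h : |b| < a) (θ : ℝ) : rho a b (θ + 2 * π) = rho a b θ + π := by
  have hf := continuous_one_div_sub_mul_cos h
  have hperiod : Function.Periodic (fun t => 1 / (a - b * cos t)) (2 * π) := fun t => by
    simp only [cos_add_two_pi]
  have hincrement : ∀ s, rho a b (s + 2 * π) - rho a b s
      = √(a ^ 2 - b ^ 2) / 2 * ∫ t in s..s + 2 * π, 1 / (a - b * cos t) := fun s => by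
    rw [rho, rho, ← mul_sub, intervalIntegral.integral_interval_sub_left
      (hf.intervalIntegrable _ _) (hf.intervalIntegrable _ _)]
  have := hincrement θ
  rw [hperiod.intervalIntegral_add_eq θ (-π), ← hincrement, neg_add_eq_sub,
    show 2 * π - π = π by ring, rho_pi h, rho_neg_pi h] at this
  linarith

end Rho

/-- Closed form of the angle function
`ρ(θ) = (√(a² − b²)/2) ∫₀^θ dθ'/(a − b cos θ')` for `a > b > 0`:
`cos ρ(θ) = √(a−b) cos(θ/2)/√(a − b cos θ)`, `sin ρ(θ) = √(a+b) sin(θ/2)/√(a − b cos θ)`;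
on `(−π, π)` one has `ρ(θ) = arctan(√((a+b)/(a−b)) tan(θ/2))`, `ρ(±π) = ±π/2`, and
`ρ(θ + 2π) = ρ(θ) + π`. -/
theorem rho_closed_form
    (a b : ℝ) (hb : 0 < b) (hab : b < a)
    (ρ : ℝ → ℝ)
    (hρ : ∀ θ : ℝ, ρ θ = (Real.sqrt (a ^ 2 - b ^ 2) / 2)
      * ∫ t in (0:ℝ)..θ, 1 / (a - b * Real.cos t)) :
    (∀ θ : ℝ,
      Real.cos (ρ θ) = Real.sqrt (a - b) * Real.cos (θ / 2) / Real.sqrt (a - b * Real.cos θ) ∧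
      Real.sin (ρ θ) = Real.sqrt (a + b) * Real.sin (θ / 2) / Real.sqrt (a - b * Real.cos θ)) ∧
    (∀ θ : ℝ, -π < θ → θ < π →
      ρ θ = Real.arctan (Real.sqrt ((a + b) / (a - b)) * Real.tan (θ / 2))) ∧
    ρ π = π / 2 ∧ ρ (-π) = -(π / 2) ∧
    (∀ θ : ℝ, ρ (θ + 2 * π) = ρ θ + π) := by
  obtain rfl : ρ = rho a b := funext hρ
  have h : |b| < a := abs_lt.2 ⟨by linarith, hab⟩
  exact ⟨cos_rho_and_sin_rho h, fun θ h₁ h₂ => rho_eq_arctan h ⟨h₁, h₂⟩, rho_pi h,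
    rho_neg_pi h, rho_add_two_pi h⟩
end

section
/- Fix Λ > 0, F > 0, B > 0 and J_e with |J_e| < Λ. For |K| < Λ − |J_e| set b₁(K) = Λ√((Λ − J_e)² − K²) and b₂(K) = Λ√((Λ + J_e)² − K²), and consider the planar vector field (the doubly averaged crossed-fields equations) K̇ = −(3/16) B² b₁(K) b₂(K) sin 2w_K, ẇ_K = (9/2) F² Λ⁴ K − (1/8) B² Λ² K [1 − (3/2) Λ² (Λ² + J_e² − K²) cos 2w_K/(b₁(K) b₂(K))]. Then each of (w_K, K) = (0,0), (π/2, 0), (π, 0), (3π/2, 0) is an equilibrium. Moreover, the Jacobian matrix of this vector field at (w_K, K) = (π/2, 0) has zero trace, and its determinant is negative if and only if B < B₁ := 6√2 F Λ √((Λ² − J_e²)/(5Λ² + J_e²)), zero if B = B₁, and positive if B > B₁; hence (π/2, 0) is a hyperbolic saddle for B < B₁ and elliptic for B > B₁. -/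
/-!
Along `K = 0` the `w`-equation vanishes identically (it carries a factor `K`), and `sin 2w`
vanishes at the four angles, which gives the equilibria. At `(π/2, 0)` both diagonal entries
of the Jacobian vanish, since `K̇` is identically zero on the line `w = π/2` and `ẇ` on the
line `K = 0`; so the trace is zero and `det = −∂_K ẇ · ∂_w K̇`. Writing `ẇ = K g(K)` with `g`
continuous gives `∂_K ẇ(0) = g(0)`, and the determinant works out to
`(3/128) B² Λ⁴ (5Λ² + J_e²) (B² − B₁²)`, whose sign is that of `B − B₁`.
-/

open Real

theorem hasDerivAt_mul_of_continuousAt_zero {𝕜 : Type*} [NontriviallyNormedField 𝕜]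
    {g : 𝕜 → 𝕜} (hg : ContinuousAt g 0) : HasDerivAt (fun x => x * g x) (g 0) 0 := by
  rw [hasDerivAt_iff_tendsto_slope]
  refine (hg.tendsto.mono_left nhdsWithin_le_nhds).congr' ?_
  filter_upwards [self_mem_nhdsWithin] with x (hx : x ≠ 0)
  rw [slope_def_field, zero_mul, sub_zero, sub_zero, mul_div_cancel_left₀ _ hx]

theorem deriv_const_mul_sin_two_mul_pi_div_two (c : ℝ) :
    deriv (fun w => c * sin (2 * w)) (π / 2) = -2 * c := by
  have h : HasDerivAt (fun w => c * sin (2 * w)) (c * (cos (2 * (π / 2)) * (2 * 1))) (π / 2) :=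
    (((hasDerivAt_id' _).const_mul 2).sin).const_mul c
  rw [h.deriv, mul_div_cancel₀ π two_ne_zero, cos_pi]
  ring

theorem sin_two_mul_eq_zero_of_mem {w : ℝ} (hw : w ∈ ({0, π / 2, π, 3 * π / 2} : Set ℝ)) :
    sin (2 * w) = 0 := by
  obtain ⟨n, rfl⟩ : ∃ n : ℤ, w = n * π / 2 := by
    rcases hw with rfl | rfl | rfl | rfl | rfl
    exacts [⟨0, by simp⟩, ⟨1, by simp⟩, ⟨2, by simp⟩, ⟨3, by simp⟩]
  rw [mul_div_cancel₀ _ two_ne_zero, sin_int_mul_pi]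

theorem sign_mul_sq_sub_sq {a b c : ℝ} (hc : 0 < c) (ha : 0 ≤ a) (hb : 0 ≤ b) :
    (c * (a ^ 2 - b ^ 2) < 0 ↔ a < b) ∧ (c * (a ^ 2 - b ^ 2) = 0 ↔ a = b) ∧
      (0 < c * (a ^ 2 - b ^ 2) ↔ b < a) := by
  refine ⟨?_, ?_, ?_⟩
  · rw [← mul_zero c, mul_lt_mul_iff_right₀ hc, sub_neg, pow_lt_pow_iff_left₀ ha hb two_ne_zero]
  · rw [mul_eq_zero, or_iff_right hc.ne', sub_eq_zero, pow_left_inj₀ ha hb two_ne_zero]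
  · rw [mul_pos_iff_of_pos_left hc, sub_pos, pow_lt_pow_iff_left₀ hb ha two_ne_zero]

theorem hasDerivAt_mul_sub_mul_one_sub_div_at_zero {b : ℝ → ℝ} (hb : ContinuousAt b 0)
    (hb0 : b 0 ≠ 0) (α β γ δ c : ℝ) :
    HasDerivAt (fun K => α * K - β * K * (1 - γ * (δ - K ^ 2) * c / b K))
      (α - β * (1 - γ * δ * c / b 0)) 0 := by
  have hg : ContinuousAt (fun K => α - β * (1 - γ * (δ - K ^ 2) * c / b K)) 0 := by
    fun_prop (disch := exact hb0)
  have h := hasDerivAt_mul_of_continuousAt_zero hg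
  rw [zero_pow two_ne_zero, sub_zero] at h
  exact h.congr_of_eventuallyEq (.of_forall fun K => by ring)

/-- The doubly averaged crossed-fields equations
`K̇ = −(3/16) B² b₁(K) b₂(K) sin 2w_K`,
`ẇ_K = (9/2) F² Λ⁴ K − (1/8) B² Λ² K [1 − (3/2) Λ² (Λ² + J_e² − K²) cos 2w_K/(b₁b₂)]`
have equilibria at `(w_K, K) = (0,0), (π/2,0), (π,0), (3π/2,0)`; the Jacobian at
`(π/2, 0)` has zero trace, and its determinant is negative/zero/positive according as
`B` is less than/equal to/greater than `B₁ = 6√2 F Λ √((Λ² − J_e²)/(5Λ² + J_e²))`. -/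
theorem doubly_averaged_crossed_fields_equilibria
    (Λ F B Je : ℝ) (hΛ : 0 < Λ) (hF : 0 < F) (hB : 0 < B) (hJe : |Je| < Λ)
    (b1 b2 : ℝ → ℝ)
    (hb1 : ∀ K : ℝ, b1 K = Λ * Real.sqrt ((Λ - Je) ^ 2 - K ^ 2))
    (hb2 : ∀ K : ℝ, b2 K = Λ * Real.sqrt ((Λ + Je) ^ 2 - K ^ 2))
    (Kdot wdot : ℝ → ℝ → ℝ)
    (hKdot : ∀ w K : ℝ, Kdot w K = -(3 / 16) * B ^ 2 * b1 K * b2 K * Real.sin (2 * w))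
    (hwdot : ∀ w K : ℝ, wdot w K = (9 / 2) * F ^ 2 * Λ ^ 4 * K
      - (1 / 8) * B ^ 2 * Λ ^ 2 * K
          * (1 - (3 / 2) * Λ ^ 2 * (Λ ^ 2 + Je ^ 2 - K ^ 2) * Real.cos (2 * w)
              / (b1 K * b2 K)))
    (B1 : ℝ)
    (hB1 : B1 = 6 * Real.sqrt 2 * F * Λ
      * Real.sqrt ((Λ ^ 2 - Je ^ 2) / (5 * Λ ^ 2 + Je ^ 2)))
    (det : ℝ)
    (hdet : det = deriv (fun w => wdot w 0) (π / 2) * deriv (fun K => Kdot (π / 2) K) 0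
      - deriv (fun K => wdot (π / 2) K) 0 * deriv (fun w => Kdot w 0) (π / 2)) :
    (∀ w ∈ ({0, π / 2, π, 3 * π / 2} : Set ℝ), Kdot w 0 = 0 ∧ wdot w 0 = 0) ∧
    (deriv (fun w => wdot w 0) (π / 2) + deriv (fun K => Kdot (π / 2) K) 0 = 0) ∧
    (det < 0 ↔ B < B1) ∧ (det = 0 ↔ B = B1) ∧ (0 < det ↔ B1 < B) := by
  have hsub : 0 < Λ - Je := by linarith [le_abs_self Je]
  have hadd : 0 < Λ + Je := by linarith [neg_abs_le Je]
  have hP : 0 < Λ ^ 2 - Je ^ 2 := by nlinarith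
  have hb10 : b1 0 = Λ * (Λ - Je) := by
    rw [hb1, zero_pow two_ne_zero, sub_zero, sqrt_sq (by positivity)]
  have hb20 : b2 0 = Λ * (Λ + Je) := by
    rw [hb2, zero_pow two_ne_zero, sub_zero, sqrt_sq (by positivity)]
  have hwdot0 (w : ℝ) : wdot w 0 = 0 := by rw [hwdot]; ring
  have hKdot_pi_div_two (K : ℝ) : Kdot (π / 2) K = 0 := by
    rw [hKdot, mul_div_cancel₀ π two_ne_zero, sin_pi, mul_zero]
  have d_ww : deriv (fun w => wdot w 0) (π / 2) = 0 := by simp only [hwdot0, deriv_const]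
  have d_KK : deriv (fun K => Kdot (π / 2) K) 0 = 0 := by
    simp only [hKdot_pi_div_two, deriv_const]
  have d_Kw : deriv (fun w => Kdot w 0) (π / 2) = 3 / 8 * B ^ 2 * Λ ^ 2 * (Λ ^ 2 - Je ^ 2) := by
    rw [funext (hKdot · 0), deriv_const_mul_sin_two_mul_pi_div_two, hb10, hb20]; ring
  have d_wK : deriv (fun K => wdot (π / 2) K) 0 = 9 / 2 * F ^ 2 * Λ ^ 4
      - 1 / 8 * B ^ 2 * Λ ^ 2 * (1 + 3 / 2 * (Λ ^ 2 + Je ^ 2) / (Λ ^ 2 - Je ^ 2)) := by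
    have hcont : ContinuousAt (fun K => b1 K * b2 K) 0 := by simp only [hb1, hb2]; fun_prop
    have hden : b1 0 * b2 0 ≠ 0 := by rw [hb10, hb20]; positivity
    rw [funext (hwdot (π / 2)),
      (hasDerivAt_mul_sub_mul_one_sub_div_at_zero hcont hden _ _ _ _ _).deriv, hb10, hb20,
      mul_div_cancel₀ π two_ne_zero, cos_pi]
    field_simp
    ring
  have hB1_sq : B1 ^ 2 = 72 * F ^ 2 * Λ ^ 2 * ((Λ ^ 2 - Je ^ 2) / (5 * Λ ^ 2 + Je ^ 2)) := by
    rw [hB1, mul_pow, mul_pow, mul_pow, mul_pow, sq_sqrt zero_le_two, sq_sqrt (by positivity)]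
    ring
  have hdet_eq : det = 3 / 128 * B ^ 2 * Λ ^ 4 * (5 * Λ ^ 2 + Je ^ 2) * (B ^ 2 - B1 ^ 2) := by
    rw [hdet, d_ww, d_KK, d_Kw, d_wK, hB1_sq]
    field_simp
    ring
  rw [hdet_eq]
  refine ⟨fun w hw => ⟨?_, hwdot0 w⟩, by rw [d_ww, d_KK, add_zero],
    sign_mul_sq_sub_sq (by positivity) hB.le (by rw [hB1]; positivity)⟩
  rw [hKdot, sin_two_mul_eq_zero_of_mem hw, mul_zero]
end
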